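/- arXiv:1703.04883 — 2 statements merged into one kernel-verified Lean document; each statement's English description precedes it below -/
import Mathlib

section
/- Let (X, 𝔅, μ) be a σ-finite measure space and let 𝓔 be a Dirichlet form on L²(μ). Then 𝓔 is lower semicontinuous on its domain with respect to local convergence in μ-measure: for every net (f_i) in D(𝓔) and every f ∈ D(𝓔), if (f_i) converges to f locally in μ-measure then 𝓔(f) ≤ liminf_i 𝓔(f_i). (Consequently 𝓔 is closable on L⁰(μ); its closure is the extended Dirichlet form 𝓔_e.) -/
open Filter MeasureTheory Topology
open scoped ENNReal

/-- Local convergence in `μ`-measure of a net (indexed by `ι`, along the filter `l`)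
of functions `F i : X → ℝ` to `f : X → ℝ`. -/
def TendstoLocInMeasure {X : Type*} [MeasurableSpace X] (μ : Measure X)
    {ι : Type*} (l : Filter ι) (F : ι → X → ℝ) (f : X → ℝ) : Prop :=
  ∀ U : Set X, MeasurableSet U → μ U < ⊤ → ∀ ε : ℝ, 0 < ε →
    Tendsto (fun i => μ (U ∩ {x | ε ≤ |F i x - f x|})) l (𝓝 0)

/-- A Dirichlet form on `L²(μ)`: a map `E : (X → ℝ) → [0,∞]` which (1) only depends on
`μ`-equivalence classes, (2) is a quadratic form, (3) has square-integrable domain,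
(4) is lower semicontinuous with respect to `L²(μ)`-convergence of nets of
square-integrable functions, and (5) satisfies `E (C ∘ f) ≤ E f` for every normal
contraction `C : ℝ → ℝ`. -/
def IsDirichletForm {X : Type*} [MeasurableSpace X] (μ : Measure X)
    (E : (X → ℝ) → ℝ≥0∞) : Prop :=
  (∀ f g : X → ℝ, f =ᵐ[μ] g → E f = E g) ∧
  (∀ f g : X → ℝ, 2 * E f + 2 * E g = E (f + g) + E (f - g)) ∧
  (∀ (c : ℝ) (f : X → ℝ), E (c • f) = ENNReal.ofReal (c ^ 2) * E f) ∧
  (∀ f : X → ℝ, E f < ⊤ → ∫⁻ x, ENNReal.ofReal (f x ^ 2) ∂μ < ⊤) ∧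
  (∀ (ι : Type*) [Preorder ι] [IsDirected ι (· ≤ ·)] [Nonempty ι]
    (F : ι → X → ℝ) (f : X → ℝ),
      (∀ i, ∫⁻ x, ENNReal.ofReal (F i x ^ 2) ∂μ < ⊤) →
      (∫⁻ x, ENNReal.ofReal (f x ^ 2) ∂μ < ⊤) →
      Tendsto (fun i => ∫⁻ x, ENNReal.ofReal ((F i x - f x) ^ 2) ∂μ) atTop (𝓝 0) →
      E f ≤ liminf (fun i => E (F i)) atTop) ∧
  (∀ C : ℝ → ℝ, C 0 = 0 → (∀ x y : ℝ, |C x - C y| ≤ |x - y|) →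
    ∀ f : X → ℝ, E (C ∘ f) ≤ E f)

/-!
Fix `M > liminf E (F i)`. Local convergence in measure on a σ-finite space yields a sequence
`g n = F (i n)` with `E (g n) < M` converging to `f` almost everywhere. Iterated midpoints of the
tails of `g`, whose energy the parallelogram law controls, contain an `E`-Cauchy sequence `h n`
that still converges to `f` a.e. Truncation by normal contractions turns a.e. convergence into
dominated `L²` convergence, where the closedness of `E` applies; this bounds `E (f - h k)` by a
multiple of the Cauchy defect, and the triangle inequality for `√E` gives `E f ≤ M`.
-/

structure IsQuadraticEnergy {V : Type*} [AddCommGroup V] [Module ℝ V] (E : V → ℝ≥0∞) : Prop where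
  parallelogram : ∀ u v, 2 * E u + 2 * E v = E (u + v) + E (u - v)
  smul : ∀ (c : ℝ) u, E (c • u) = ENNReal.ofReal (c ^ 2) * E u

lemma eq_quadratic_of_second_difference {σ : ℕ → ℝ} {β : ℝ}
    (h : ∀ n, σ (n + 2) + σ n = 2 * σ (n + 1) + 2 * β) (n : ℕ) :
    σ n = σ 0 + n * (σ 1 - σ 0 - β) + n ^ 2 * β := by
  induction n using Nat.twoStepInduction with
  | zero => simp
  | one => ring
  | more n ih₀ ih₁ =>
    have := h n
    push_cast at ih₁ ⊢
    linarith

lemma le_of_forall_nat_mul_le_add_sq_mul {α β c : ℝ} (hα : 0 ≤ α) (hβ : 0 ≤ β)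
    (h : ∀ m : ℕ, m * c ≤ α + m ^ 2 * β) : c ≤ 2 * √(α * β) + β := by
  rcases hβ.eq_or_lt with rfl | hβ
  · suffices c ≤ 0 by simpa
    by_contra! hc
    obtain ⟨m, hm⟩ := exists_nat_gt (α / c)
    have := h m
    rw [div_lt_iff₀ hc] at hm
    linarith
  · set t := √(α * β)
    set s := t / β
    have ht : t ^ 2 = α * β := Real.sq_sqrt (by positivity)
    have hst : s * β = t := div_mul_cancel₀ t hβ.ne'
    have hα_eq : α = s * t := by
      apply mul_right_cancel₀ hβ.ne'
      rw [← ht, mul_right_comm, hst, sq]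
    -- `m ≈ √(α / β)` nearly minimizes `α / m + m * β`
    set m : ℕ := max ⌈s⌉₊ 1
    have hsm : s ≤ m := by push_cast [m]; exact le_max_of_le_left (Nat.le_ceil s)
    have hm1 : (1 : ℝ) ≤ m := by push_cast [m]; exact le_max_right _ _
    have hms : (m : ℝ) ≤ s + 1 := by
      have : 0 ≤ s := by positivity
      push_cast [m]
      exact max_le (Nat.ceil_lt_add_one this).le (by linarith)
    have ht0 : 0 ≤ t := Real.sqrt_nonneg _
    have : (m : ℝ) * c ≤ m * (2 * t + β) := by
      have hα_le : α ≤ m * t := by rw [hα_eq]; exact mul_le_mul_of_nonneg_right hsm ht0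
      have hβ_le : (m : ℝ) ^ 2 * β ≤ m * (t + β) := by
        rw [← hst, sq, mul_assoc, ← add_one_mul]
        gcongr
      linarith [h m]
    exact le_of_mul_le_mul_left this (by linarith)

namespace IsQuadraticEnergy

variable {V : Type*} [AddCommGroup V] [Module ℝ V] {E : V → ℝ≥0∞}

lemma neg (hE : IsQuadraticEnergy E) (u : V) : E (-u) = E u := by
  simpa using hE.smul (-1) u

lemma add_le (hE : IsQuadraticEnergy E) (u v : V) : E (u + v) ≤ 2 * E u + 2 * E v := by
  rw [hE.parallelogram]
  exact le_self_add

lemma add_ne_top (hE : IsQuadraticEnergy E) {u v : V} (hu : E u ≠ ⊤) (hv : E v ≠ ⊤) :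
    E (u + v) ≠ ⊤ :=
  ne_top_of_le_ne_top (by finiteness) (hE.add_le u v)

lemma smul_ne_top (hE : IsQuadraticEnergy E) (c : ℝ) {u : V} (hu : E u ≠ ⊤) : E (c • u) ≠ ⊤ := by
  rw [hE.smul]
  finiteness

lemma sub_ne_top (hE : IsQuadraticEnergy E) {u v : V} (hu : E u ≠ ⊤) (hv : E v ≠ ⊤) :
    E (u - v) ≠ ⊤ := by
  rw [sub_eq_add_neg]
  exact hE.add_ne_top hu (by rwa [hE.neg])

lemma four_mul_half_smul (hE : IsQuadraticEnergy E) (u : V) : 4 * E ((2⁻¹ : ℝ) • u) = E u := by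
  rw [hE.smul, ← mul_assoc, show (4 : ℝ≥0∞) = ENNReal.ofReal 4 by norm_num,
    ← ENNReal.ofReal_mul (by norm_num)]
  norm_num

lemma sub_add_four_mul_midpoint (hE : IsQuadraticEnergy E) (u v : V) :
    E (u - v) + 4 * E ((2⁻¹ : ℝ) • (u + v)) = 2 * E u + 2 * E v := by
  rw [hE.four_mul_half_smul, add_comm, hE.parallelogram]

lemma midpoint_le (hE : IsQuadraticEnergy E) {u v : V} {M : ℝ≥0∞} (hu : E u ≤ M)
    (hv : E v ≤ M) : E ((2⁻¹ : ℝ) • (u + v)) ≤ M := by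
  have : 4 * E ((2⁻¹ : ℝ) • (u + v)) ≤ 4 * M := by
    calc 4 * E ((2⁻¹ : ℝ) • (u + v)) ≤ E (u - v) + 4 * E ((2⁻¹ : ℝ) • (u + v)) := le_add_self
      _ = 2 * E u + 2 * E v := hE.sub_add_four_mul_midpoint u v
      _ ≤ 2 * M + 2 * M := by gcongr
      _ = 4 * M := by ring
  exact (ENNReal.mul_le_mul_iff_right (by norm_num) (by norm_num)).1 this

lemma toReal_parallelogram (hE : IsQuadraticEnergy E) {u v : V} (hu : E u ≠ ⊤) (hv : E v ≠ ⊤) :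
    2 * (E u).toReal + 2 * (E v).toReal = (E (u + v)).toReal + (E (u - v)).toReal := by
  have := congrArg ENNReal.toReal (hE.parallelogram u v)
  rwa [ENNReal.toReal_add (by finiteness) (by finiteness),
    ENNReal.toReal_add (hE.add_ne_top hu hv) (hE.sub_ne_top hu hv),
    ENNReal.toReal_mul, ENNReal.toReal_mul, ENNReal.toReal_ofNat] at this

/-- A weak form of the triangle inequality `√E(u+v) ≤ √E u + √E v`: the parallelogram law only
shows that `n ↦ E (u - n • v)` is quadratic on the integers `n`, where it is nonnegative. -/
lemma toReal_add_le (hE : IsQuadraticEnergy E) {u v : V} (hu : E u ≠ ⊤) (hv : E v ≠ ⊤) :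
    (E (u + v)).toReal ≤
      (E u).toReal + 2 * √((E u).toReal * (E v).toReal) + 2 * (E v).toReal := by
  set α := (E u).toReal
  set β := (E v).toReal
  set σ : ℕ → ℝ := fun n => (E (u - (n : ℝ) • v)).toReal
  have hfin : ∀ n : ℕ, E (u - (n : ℝ) • v) ≠ ⊤ := fun n => hE.sub_ne_top hu (hE.smul_ne_top _ hv)
  have hrec : ∀ n, σ (n + 2) + σ n = 2 * σ (n + 1) + 2 * β := by
    intro n
    have := hE.toReal_parallelogram (hfin (n + 1)) hv
    rw [show u - ((n + 1 : ℕ) : ℝ) • v + v = u - (n : ℝ) • v by push_cast; module,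
      show u - ((n + 1 : ℕ) : ℝ) • v - v = u - ((n + 2 : ℕ) : ℝ) • v by push_cast; module] at this
    linarith
  have hσ0 : σ 0 = α := by simp [σ, α]
  have hquad := eq_quadratic_of_second_difference hrec
  have hsum : (E (u + v)).toReal = 2 * α + 2 * β - σ 1 := by
    have := hE.toReal_parallelogram hu hv
    simp only [σ, Nat.cast_one, one_smul]
    linarith
  have hc := le_of_forall_nat_mul_le_add_sq_mul (α := α) (β := β) (c := α + β - σ 1)
    ENNReal.toReal_nonneg ENNReal.toReal_nonneg fun m => by
      have := hquad m
      have : 0 ≤ σ m := ENNReal.toReal_nonneg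
      nlinarith
  linarith

end IsQuadraticEnergy

inductive MidClosure {V : Type*} [AddCommGroup V] [Module ℝ V] (s : Set V) : V → Prop
  | base {u : V} : u ∈ s → MidClosure s u
  | mid {u v : V} : MidClosure s u → MidClosure s v → MidClosure s ((2⁻¹ : ℝ) • (u + v))

namespace MidClosure

variable {V : Type*} [AddCommGroup V] [Module ℝ V] {s t : Set V} {u : V}

lemma mono (hst : s ⊆ t) (hu : MidClosure s u) : MidClosure t u := by
  induction hu with
  | base hu => exact base (hst hu)
  | mid _ _ ihu ihv => exact mid ihu ihv

lemma energy_le {E : V → ℝ≥0∞} (hE : IsQuadraticEnergy E) {M : ℝ≥0∞}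
    (hs : ∀ v ∈ s, E v ≤ M) (hu : MidClosure s u) : E u ≤ M := by
  induction hu with
  | base hu => exact hs _ hu
  | mid _ _ ihu ihv => exact hE.midpoint_le ihu ihv

lemma abs_sub_le {X : Type*} {s : Set (X → ℝ)} {p f : X → ℝ} {x : X} {c : ℝ}
    (hs : ∀ q ∈ s, |q x - f x| ≤ c) (hp : MidClosure s p) : |p x - f x| ≤ c := by
  induction hp with
  | base hq => exact hs _ hq
  | @mid q r _ _ ihq ihr =>
    calc |((2⁻¹ : ℝ) • (q + r)) x - f x| = |2⁻¹ * (q x - f x) + 2⁻¹ * (r x - f x)| := by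
          simp only [Pi.smul_apply, Pi.add_apply, smul_eq_mul]; ring_nf
      _ ≤ 2⁻¹ * |q x - f x| + 2⁻¹ * |r x - f x| := by
          grw [abs_add_le, abs_mul, abs_mul, abs_of_pos (by norm_num : (0 : ℝ) < 2⁻¹)]
      _ ≤ c := by linarith

lemma tendsto_of_tails {X : Type*} {g h : ℕ → X → ℝ} {f : X → ℝ} {x : X}
    (hh : ∀ n, MidClosure (g '' Set.Ici n) (h n)) (hg : Tendsto (g · x) atTop (𝓝 (f x))) :
    Tendsto (h · x) atTop (𝓝 (f x)) := by
  rw [Metric.tendsto_atTop] at hg ⊢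
  intro d hd
  obtain ⟨N, hN⟩ := hg (d / 2) (by positivity)
  refine ⟨N, fun n hn => lt_of_le_of_lt ?_ (half_lt_self hd)⟩
  refine (hh n).abs_sub_le ?_
  rintro _ ⟨m, hm, rfl⟩
  exact (hN m (hn.trans hm)).le

end MidClosure

namespace IsQuadraticEnergy
variable {V : Type*} [AddCommGroup V] [Module ℝ V] {E : V → ℝ≥0∞}

/-- A Banach–Saks type lemma: the infima `D n` of `E` over the midpoint closures of the tails
of `g` increase to a finite limit, and near-minimizers `h n` are Cauchy for `E` by the
parallelogram law, because the midpoint of `h j` and `h k` lies in the `k`-th closure. -/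
lemma exists_midClosure_tails_cauchy (hE : IsQuadraticEnergy E) {g : ℕ → V} {M : ℝ≥0∞}
    (hM : M ≠ ⊤) (hg : ∀ n, E (g n) ≤ M) {ε : ℝ≥0∞} (hε : ε ≠ 0) :
    ∃ (h : ℕ → V) (k : ℕ), (∀ n, MidClosure (g '' Set.Ici n) (h n)) ∧
      ∀ j, k ≤ j → E (h j - h k) ≤ ε := by
  set δ := ε / 6
  have hδ : δ ≠ 0 := ENNReal.div_ne_zero.2 ⟨hε, by norm_num⟩
  set D : ℕ → ℝ≥0∞ := fun n => ⨅ (p : V) (_ : MidClosure (g '' Set.Ici n) p), E p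
  have hclosure_mono : ∀ {k j}, k ≤ j → ∀ {p}, MidClosure (g '' Set.Ici j) p →
      MidClosure (g '' Set.Ici k) p :=
    fun hkj _ => MidClosure.mono (Set.image_mono (Set.Ici_subset_Ici.2 hkj))
  have hD_mono : Monotone D := fun k j hkj =>
    le_iInf₂ fun p hp => iInf₂_le p (hclosure_mono hkj hp)
  have hD_le : ∀ n, D n ≤ M := fun n =>
    (iInf₂_le (g n) (MidClosure.base (Set.mem_image_of_mem g Set.self_mem_Ici))).trans (hg n)
  have hD_ne_top : ∀ n, D n ≠ ⊤ := fun n => ne_top_of_le_ne_top hM (hD_le n)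
  have hnear : ∀ n, ∃ p, MidClosure (g '' Set.Ici n) p ∧ E p ≤ D n + δ := by
    intro n
    obtain ⟨p, hp⟩ := iInf_lt_iff.1 (ENNReal.lt_add_right (hD_ne_top n) hδ)
    obtain ⟨hp, hlt⟩ := iInf_lt_iff.1 hp
    exact ⟨p, hp, hlt.le⟩
  choose h hh hEh using hnear
  have hsup_ne_top : ⨆ n, D n ≠ ⊤ := ne_top_of_le_ne_top hM (iSup_le hD_le)
  obtain ⟨k, hk⟩ := (ENNReal.tendsto_atTop hsup_ne_top).1 (tendsto_atTop_iSup hD_mono) δ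
    (pos_iff_ne_zero.2 hδ)
  have hDk : ∀ j, D j ≤ D k + δ := fun j =>
    (le_iSup D j).trans (tsub_le_iff_right.1 (hk k le_rfl).1)
  refine ⟨h, k, hh, fun j hkj => ?_⟩
  have hmid : D k ≤ E ((2⁻¹ : ℝ) • (h j + h k)) :=
    iInf₂_le _ (MidClosure.mid (hclosure_mono hkj (hh j)) (hh k))
  have : E (h j - h k) + 4 * D k ≤ ε + 4 * D k :=
    calc E (h j - h k) + 4 * D k ≤ E (h j - h k) + 4 * E ((2⁻¹ : ℝ) • (h j + h k)) := by
          gcongr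
      _ = 2 * E (h j) + 2 * E (h k) := hE.sub_add_four_mul_midpoint _ _
      _ ≤ 2 * (D k + δ + δ) + 2 * (D k + δ) := by
          gcongr
          · exact (hEh j).trans (add_le_add_left (hDk j) δ)
          · exact hEh k
      _ = 6 * δ + 4 * D k := by ring
      _ = ε + 4 * D k := by rw [ENNReal.mul_div_cancel (by norm_num) (by norm_num)]
  exact (ENNReal.add_le_add_iff_right (ENNReal.mul_ne_top (by norm_num) (hD_ne_top k))).1 this

end IsQuadraticEnergy

lemma tendsto_lintegral_nhds_zero_of_le {X : Type*} [MeasurableSpace X] {μ : Measure X}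
    {F : ℕ → X → ℝ≥0∞} {G : X → ℝ≥0∞} (hFG : ∀ n x, F n x ≤ G x) (hG : ∫⁻ x, G x ∂μ ≠ ⊤)
    (hF : ∀ᵐ x ∂μ, Tendsto (F · x) atTop (𝓝 0)) :
    Tendsto (fun n => ∫⁻ x, F n x ∂μ) atTop (𝓝 0) := by
  choose φ hφ_meas hφ_le hφ_eq using fun n => exists_measurable_le_lintegral_eq μ (F n)
  have hφ : ∀ᵐ x ∂μ, Tendsto (φ · x) atTop (𝓝 0) := by
    filter_upwards [hF] with x hx
    exact tendsto_of_tendsto_of_tendsto_of_le_of_le tendsto_const_nhds hx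
      (fun _ => zero_le) (fun n => hφ_le n x)
  have hsup : ∫⁻ x, ⨆ n, φ n x ∂μ ≠ ⊤ :=
    ne_top_of_le_ne_top hG (lintegral_mono fun x => iSup_le fun n => (hφ_le n x).trans (hFG n x))
  simpa only [hφ_eq, lintegral_zero] using tendsto_lintegral_of_dominated_convergence _ hφ_meas
    (fun n => .of_forall fun x => le_iSup (φ · x) n) hsup hφ

lemma tendsto_lintegral_sq_sub_of_abs_le {X : Type*} [MeasurableSpace X] {μ : Measure X}
    {G : ℕ → X → ℝ} {g H : X → ℝ} (hG : ∀ n x, |G n x| ≤ H x) (hg : ∀ x, |g x| ≤ H x)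
    (hH : ∫⁻ x, ENNReal.ofReal (H x ^ 2) ∂μ ≠ ⊤)
    (hae : ∀ᵐ x ∂μ, Tendsto (G · x) atTop (𝓝 (g x))) :
    Tendsto (fun n => ∫⁻ x, ENNReal.ofReal ((G n x - g x) ^ 2) ∂μ) atTop (𝓝 0) := by
  refine tendsto_lintegral_nhds_zero_of_le (G := fun x => 4 * ENNReal.ofReal (H x ^ 2))
    (fun n x => ?_) (by rw [lintegral_const_mul' _ _ (by norm_num)]; finiteness) ?_
  · rw [← ENNReal.ofReal_ofNat 4, ← ENNReal.ofReal_mul (by norm_num)]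
    apply ENNReal.ofReal_le_ofReal
    have := abs_sub (G n x) (g x)
    nlinarith [hG n x, hg x, abs_nonneg (G n x - g x), sq_abs (G n x - g x)]
  · filter_upwards [hae] with x hx
    simpa using ENNReal.tendsto_ofReal ((hx.sub_const (g x)).pow 2)

def truncAt (v a : ℝ) : ℝ := max (min a v) (-v)

lemma continuous_truncAt (v : ℝ) : Continuous (truncAt v) := by
  unfold truncAt; fun_prop

lemma abs_truncAt_le {v : ℝ} (hv : 0 ≤ v) (a : ℝ) : |truncAt v a| ≤ v := by
  unfold truncAt
  rw [abs_le]
  exact ⟨le_max_right _ _, max_le (min_le_right _ _) (by linarith)⟩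

lemma abs_truncAt_abs_le (a b : ℝ) : |truncAt |b| a| ≤ |a| := by
  unfold truncAt
  rw [abs_le]
  constructor <;> cases abs_cases a <;> cases abs_cases b <;> grind

lemma abs_truncAt_abs_sub_le (a b : ℝ) : |truncAt |b| a - a| ≤ |b - a| := by
  unfold truncAt
  rw [abs_le]
  constructor <;> cases abs_cases (b - a) <;> cases abs_cases b <;> grind

namespace IsDirichletForm

variable {X : Type*} [MeasurableSpace X] {μ : Measure X} {E : (X → ℝ) → ℝ≥0∞}

lemma isQuadraticEnergy (hE : IsDirichletForm μ E) : IsQuadraticEnergy E :=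
  ⟨hE.2.1, hE.2.2.1⟩

lemma lintegral_sq_ne_top (hE : IsDirichletForm μ E) {u : X → ℝ} (hu : E u ≠ ⊤) :
    ∫⁻ x, ENNReal.ofReal (u x ^ 2) ∂μ ≠ ⊤ :=
  (hE.2.2.2.1 u hu.lt_top).ne

lemma le_liminf_of_tendsto_lintegral (hE : IsDirichletForm μ E) {G : ℕ → X → ℝ} {g : X → ℝ}
    (hG : ∀ n, ∫⁻ x, ENNReal.ofReal (G n x ^ 2) ∂μ ≠ ⊤)
    (hg : ∫⁻ x, ENNReal.ofReal (g x ^ 2) ∂μ ≠ ⊤)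
    (hGg : Tendsto (fun n => ∫⁻ x, ENNReal.ofReal ((G n x - g x) ^ 2) ∂μ) atTop (𝓝 0)) :
    E g ≤ liminf (fun n => E (G n)) atTop := by
  refine (hE.2.2.2.2.1 (ULift ℕ) (fun i => G i.down) g (fun i => (hG i.down).lt_top) hg.lt_top
    (hGg.comp (ULift.orderIso (α := ℕ)).tendsto_atTop)).trans_eq ?_
  exact (liminf_comp (fun n => E (G n)) ULift.down atTop).trans
    (congrArg _ (ULift.orderIso (α := ℕ)).map_atTop)

lemma abs_le (hE : IsDirichletForm μ E) (u : X → ℝ) : E (fun x => |u x|) ≤ E u :=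
  hE.2.2.2.2.2 abs abs_zero (fun a b => abs_abs_sub_abs_le_abs_sub a b) u

lemma max_add_min_le (hE : IsDirichletForm μ E) (u w : X → ℝ) :
    E (fun x => max (u x) (w x)) + E (fun x => min (u x) (w x)) ≤ E u + E w := by
  have hQ := hE.isQuadraticEnergy
  set q : X → ℝ := fun x => |u x - w x|
  have hmax : (fun x => max (u x) (w x)) = (2⁻¹ : ℝ) • (u + w + q) := by
    ext x; simp only [Pi.smul_apply, Pi.add_apply, smul_eq_mul, q]; grind
  have hmin : (fun x => min (u x) (w x)) = (2⁻¹ : ℝ) • (u + w - q) := by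
    ext x; simp only [Pi.smul_apply, Pi.add_apply, Pi.sub_apply, smul_eq_mul, q]; grind
  have : 4 * (E (fun x => max (u x) (w x)) + E (fun x => min (u x) (w x))) ≤ 4 * (E u + E w) :=
    calc 4 * (E (fun x => max (u x) (w x)) + E (fun x => min (u x) (w x)))
        = 2 * E (u + w) + 2 * E q := by
          rw [mul_add, hmax, hmin, hQ.four_mul_half_smul, hQ.four_mul_half_smul, hQ.parallelogram]
      _ ≤ 2 * E (u + w) + 2 * E (u - w) := by gcongr; exact hE.abs_le (u - w)
      _ = 4 * (E u + E w) := by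
          rw [← mul_add, ← hQ.parallelogram]; ring
  exact (ENNReal.mul_le_mul_iff_right (by norm_num) (by norm_num)).1 this

lemma truncAt_le (hE : IsDirichletForm μ E) (u w : X → ℝ) :
    E (fun x => truncAt |w x| (u x)) ≤ E u + 2 * E w := by
  have hmin := le_add_self.trans (hE.max_add_min_le u fun x => |w x|)
  have hmax := le_self_add.trans (hE.max_add_min_le (fun x => min (u x) |w x|) (-fun x => |w x|))
  rw [hE.isQuadraticEnergy.neg] at hmax
  calc E (fun x => truncAt |w x| (u x))
      ≤ E u + E (fun x => |w x|) + E (fun x => |w x|) := hmax.trans (by gcongr)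
    _ ≤ E u + 2 * E w := by grw [hE.abs_le w]; rw [add_assoc, two_mul]

lemma le_of_tendsto_of_abs_le (hE : IsDirichletForm μ E) {G : ℕ → X → ℝ} {g H : X → ℝ}
    {C : ℝ≥0∞} (hGC : ∀ n, E (G n) ≤ C) (hG : ∀ n x, |G n x| ≤ H x) (hg : ∀ x, |g x| ≤ H x)
    (hH : ∫⁻ x, ENNReal.ofReal (H x ^ 2) ∂μ ≠ ⊤)
    (hae : ∀ᵐ x ∂μ, Tendsto (G · x) atTop (𝓝 (g x))) : E g ≤ C := by
  have hL2 : ∀ {u : X → ℝ}, (∀ x, |u x| ≤ H x) → ∫⁻ x, ENNReal.ofReal (u x ^ 2) ∂μ ≠ ⊤ :=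
    fun hu => ne_top_of_le_ne_top hH (lintegral_mono fun x =>
      ENNReal.ofReal_le_ofReal (sq_le_sq.2 ((hu x).trans (le_abs_self _))))
  calc E g ≤ liminf (fun n => E (G n)) atTop := hE.le_liminf_of_tendsto_lintegral
        (fun n => hL2 (hG n)) (hL2 hg) (tendsto_lintegral_sq_sub_of_abs_le hG hg hH hae)
    _ ≤ C := liminf_le_of_frequently_le' (.of_forall hGC)

/-- Truncating `Y j'` and `y` at the level `|Y j|` makes them dominated in `L²`, at the cost of
`2 E (Y j)` in energy. -/
lemma le_three_mul_of_ae_tendsto (hE : IsDirichletForm μ E) {Y : ℕ → X → ℝ} {y : X → ℝ}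
    {δ : ℝ≥0∞} (hY : ∀ j, E (Y j) ≤ δ) (hy : E y ≠ ⊤)
    (hae : ∀ᵐ x ∂μ, Tendsto (Y · x) atTop (𝓝 (y x))) : E y ≤ 3 * δ := by
  rcases eq_top_or_lt_top δ with rfl | hδ
  · simp
  set t : ℕ → X → ℝ := fun j x => truncAt |Y j x| (y x)
  have ht : ∀ j, E (t j) ≤ 3 * δ := by
    intro j
    refine hE.le_of_tendsto_of_abs_le (G := fun j' x => truncAt |Y j x| (Y j' x))
      (fun j' => (hE.truncAt_le _ _).trans ?_) (fun _ _ => abs_truncAt_le (abs_nonneg _) _)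
      (fun _ => abs_truncAt_le (abs_nonneg _) _) ?_ ?_
    · grw [hY j', hY j]; ring_nf; rfl
    · simpa only [sq_abs] using hE.lintegral_sq_ne_top (ne_top_of_le_ne_top hδ.ne (hY j))
    · filter_upwards [hae] with x hx
      exact ((continuous_truncAt _).tendsto _).comp hx
  refine hE.le_of_tendsto_of_abs_le ht (fun _ _ => abs_truncAt_abs_le _ _) (fun _ => le_rfl)
    (by simpa only [sq_abs] using hE.lintegral_sq_ne_top hy) ?_
  filter_upwards [hae] with x hx
  refine tendsto_iff_norm_sub_tendsto_zero.2 (squeeze_zero (fun _ => norm_nonneg _) (fun j => ?_)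
    (by simpa using (hx.sub_const (y x)).abs))
  exact (Real.norm_eq_abs _).trans_le (abs_truncAt_abs_sub_le _ _)

/-- The near-minimizers `h n` of the Banach–Saks lemma still converge to `f` a.e. and are
`E`-Cauchy, so `E (f - h k)` is small by `le_three_mul_of_ae_tendsto`; the triangle inequality
then gives `E f ≤ E (h k) + o(1) ≤ M + o(1)`. -/
lemma le_of_ae_tendsto (hE : IsDirichletForm μ E) {g : ℕ → X → ℝ} {f : X → ℝ} {M : ℝ≥0∞}
    (hg : ∀ n, E (g n) ≤ M) (hf : E f ≠ ⊤)
    (hae : ∀ᵐ x ∂μ, Tendsto (g · x) atTop (𝓝 (f x))) : E f ≤ M := by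
  rcases eq_top_or_lt_top M with rfl | hM
  · exact le_top
  have hQ := hE.isQuadraticEnergy
  set bound : ℝ → ℝ := fun ε => M.toReal + 2 * √(M.toReal * (3 * ε)) + 2 * (3 * ε)
  have hbound : ∀ ε > 0, (E f).toReal ≤ bound ε := by
    intro ε hε
    obtain ⟨h, k, hh, hcauchy⟩ :=
      hQ.exists_midClosure_tails_cauchy hM.ne hg (ENNReal.ofReal_pos.2 hε).ne'
    have hhk : E (h k) ≤ M := (hh k).energy_le hQ (by rintro _ ⟨n, -, rfl⟩; exact hg n)
    have hhk_ne_top : E (h k) ≠ ⊤ := ne_top_of_le_ne_top hM.ne hhk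
    have hrest : E (f - h k) ≤ 3 * ENNReal.ofReal ε := by
      refine hE.le_three_mul_of_ae_tendsto (Y := fun j => h (k + j) - h k)
        (fun j => hcauchy _ (Nat.le_add_right k j)) (hQ.sub_ne_top hf hhk_ne_top) ?_
      filter_upwards [hae] with x hx
      exact (((MidClosure.tendsto_of_tails hh hx).comp (tendsto_add_atTop_nat k)).congr
        fun j => by simp [add_comm]).sub_const (h k x)
    have hrest_toReal : (E (f - h k)).toReal ≤ 3 * ε := by
      grw [hrest]
      · simp [ENNReal.toReal_ofReal hε.le]
      · finiteness
    have := hQ.toReal_add_le hhk_ne_top (hQ.sub_ne_top hf hhk_ne_top)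
    rw [add_sub_cancel] at this
    grw [this, hrest_toReal, ENNReal.toReal_mono hM.ne hhk]
  have hlim : Tendsto bound (𝓝[>] 0) (𝓝 M.toReal) := by
    have : Continuous bound := by fun_prop
    simpa [bound] using this.continuousWithinAt.tendsto (x := 0) (s := Set.Ioi 0)
  have := ge_of_tendsto hlim (eventually_nhdsWithin_of_forall hbound)
  exact (ENNReal.toReal_le_toReal hf hM.ne).1 this

end IsDirichletForm

lemma TendstoLocInMeasure.exists_seq_ae_tendsto {X : Type*} [MeasurableSpace X] {μ : Measure X}
    [SigmaFinite μ] {ι : Type*} {l : Filter ι} {F : ι → X → ℝ} {f : X → ℝ}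
    (hconv : TendstoLocInMeasure μ l F f) {p : ι → Prop} (hp : ∃ᶠ i in l, p i) :
    ∃ I : ℕ → ι, (∀ n, p (I n)) ∧ ∀ᵐ x ∂μ, Tendsto (fun n => F (I n) x) atTop (𝓝 (f x)) := by
  set B : ι → ℕ → Set X := fun i n =>
    spanningSets μ n ∩ {x | 1 / ((n : ℝ) + 1) ≤ |F i x - f x|}
  have hsel : ∀ n, ∃ i, p i ∧ μ (B i n) ≤ 2⁻¹ ^ n := fun n => by
    have hB := hconv _ (measurableSet_spanningSets μ n) (measure_spanningSets_lt_top μ n)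
      (1 / ((n : ℝ) + 1)) Nat.one_div_pos_of_nat
    exact (hp.and_eventually
      (ENNReal.tendsto_nhds_zero.1 hB _ (ENNReal.pow_pos (by norm_num) n))).exists
  choose I hpI hB using hsel
  refine ⟨I, hpI, ?_⟩
  have hsum : ∑' n, μ (B (I n) n) ≠ ⊤ :=
    ne_top_of_le_ne_top (by rw [ENNReal.tsum_geometric_two]; finiteness) (ENNReal.tsum_le_tsum hB)
  filter_upwards [ae_eventually_notMem hsum] with x hx
  have hsmall : ∀ᶠ n in atTop, ‖F (I n) x - f x‖ ≤ 1 / ((n : ℝ) + 1) := by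
    filter_upwards [hx, eventually_mem_spanningSets μ x] with n hnB hnS
    simp only [B, Set.mem_inter_iff, Set.mem_ofPred_eq, not_and, not_le] at hnB
    exact (hnB hnS).le
  exact tendsto_iff_norm_sub_tendsto_zero.2 (squeeze_zero' (.of_forall fun _ => norm_nonneg _)
    hsmall tendsto_one_div_add_atTop_nhds_zero_nat)

theorem stmt_5_general {X : Type*} [MeasurableSpace X] (μ : Measure X) [SigmaFinite μ]
    (E : (X → ℝ) → ℝ≥0∞) (hE : IsDirichletForm μ E)
    (ι : Type*) [Preorder ι]
    (F : ι → X → ℝ) (f : X → ℝ)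
    (hf : E f < ⊤)
    (hconv : TendstoLocInMeasure μ atTop F f) :
    E f ≤ liminf (fun i => E (F i)) atTop := by
  refine le_of_forall_gt_imp_ge_of_dense fun M hM => ?_
  obtain ⟨I, hIM, hae⟩ :=
    hconv.exists_seq_ae_tendsto (frequently_lt_of_liminf_lt (by isBoundedDefault) hM)
  exact hE.le_of_ae_tendsto (fun n => (hIM n).le) hf.ne hae

/-- Dirichlet forms are lower semicontinuous on their domain with respect to
local convergence in measure. -/
theorem stmt_5 {X : Type*} [MeasurableSpace X] (μ : Measure X) [SigmaFinite μ]
    (E : (X → ℝ) → ℝ≥0∞) (hE : IsDirichletForm μ E)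
    (ι : Type*) [Preorder ι] [IsDirected ι (· ≤ ·)] [Nonempty ι]
    (F : ι → X → ℝ) (f : X → ℝ)
    (hF : ∀ i, E (F i) < ⊤) (hf : E f < ⊤)
    (hconv : TendstoLocInMeasure μ atTop F f) :
    E f ≤ liminf (fun i => E (F i)) atTop :=
  stmt_5_general μ E hE ι F f hf hconv
end

section
/- Let (X, 𝔅, μ) be a σ-finite measure space and let 𝓔 be a Dirichlet form on L²(μ). If f : X → ℝ is square-integrable (∫ f² dμ < ∞) and there exists a net (f_i) in D(𝓔) which is 𝓔-Cauchy (for every ε > 0 there is i₀ with 𝓔(f_i − f_j) ≤ ε for all i, j ⪰ i₀) and which converges to f locally in μ-measure, then 𝓔(f) < ∞. (Thus D(𝓔) equals the intersection of the extended Dirichlet space of 𝓔 with L²(μ).) -/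
/-!
Fix `k` and clamp everything into `[-|F k|, |F k|]`. Clamping is a `⊔` followed by a `⊓`, and the
Markov property gives `E (u ⊔ v) ≤ E u + E v`, so the clamped `F i` have energy at most
`E (F i) + 2 E (F k)`, bounded for large `i` by the Cauchy property. They are dominated by
`|F k| ∈ L²` and converge locally in measure to the clamped `f`; on a σ-finite space domination
upgrades this to `L²` convergence, so lower semicontinuity bounds the energy of the clamped `f`
uniformly in large `k`. As `k → ∞` the clamped `f` converge to `f` in `L²` (dominated by `2|f|`),
and lower semicontinuity once more bounds `E f`.
-/

open Filter MeasureTheory Topology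
open scoped ENNReal

theorem ENNReal.exists_pos_ofReal_mul_lt {a b : ℝ≥0∞} (ha : a ≠ ⊤) (hb : b ≠ 0) :
    ∃ t : ℝ, 0 < t ∧ ENNReal.ofReal t * a < b := by
  obtain ⟨c, hc, hca⟩ := ENNReal.exists_pos_mul_lt ha hb
  obtain ⟨t, -, ht, htc⟩ := ENNReal.lt_iff_exists_real_btwn.1 hc
  exact ⟨t, ENNReal.ofReal_pos.1 ht, (mul_le_mul_left htc.le _).trans_lt hca⟩

theorem ENNReal.exists_seq_tendsto_zero_forall {ι : Type*} {l : Filter ι} [l.NeBot]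
    {v : ι → ℝ≥0∞} (hv : Tendsto v l (𝓝 0)) {p : ι → Prop} (hp : ∀ᶠ i in l, p i) :
    ∃ s : ℕ → ι, Tendsto (v ∘ s) atTop (𝓝 0) ∧ ∀ n, p (s n) := by
  have h : ∀ n : ℕ, ∃ i, v i ≤ (n : ℝ≥0∞)⁻¹ ∧ p i := fun n =>
    ((ENNReal.tendsto_nhds_zero.1 hv _ (ENNReal.inv_pos.2 (ENNReal.natCast_ne_top n))).and
      hp).exists
  choose s hsv hsp using h
  exact ⟨s, tendsto_of_tendsto_of_tendsto_of_le_of_le tendsto_const_nhds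
    ENNReal.tendsto_inv_nat_nhds_zero (fun _ => zero_le) hsv, hsp⟩

def symmClamp (c a : ℝ) : ℝ := min (max a (-c)) c

theorem abs_symmClamp_sub_symmClamp_le (c a b : ℝ) :
    |symmClamp c a - symmClamp c b| ≤ |a - b| :=
  (abs_min_sub_min_le_max _ _ _ _).trans <| by
    simpa using abs_max_sub_max_le_abs a b (-c)

theorem abs_symmClamp_le {c : ℝ} (hc : 0 ≤ c) (a : ℝ) : |symmClamp c a| ≤ c :=
  abs_le.2 ⟨le_min (le_max_right _ _) (by linarith), min_le_right _ _⟩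

theorem abs_symmClamp_le_abs {c : ℝ} (hc : 0 ≤ c) (a : ℝ) : |symmClamp c a| ≤ |a| := by
  have h0 : symmClamp c 0 = 0 := by simp [symmClamp, hc]
  simpa [h0] using abs_symmClamp_sub_symmClamp_le c a 0

theorem abs_symmClamp_abs_sub_le (a b : ℝ) : |symmClamp |b| a - a| ≤ |b - a| := by
  unfold symmClamp
  grind

theorem abs_symmClamp_sub_symmClamp_le_two_mul {c : ℝ} (hc : 0 ≤ c) (a b : ℝ) :
    |symmClamp c a - symmClamp c b| ≤ 2 * c := by
  have := abs_symmClamp_le hc a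
  have := abs_symmClamp_le hc b
  linarith [abs_sub (symmClamp c a) (symmClamp c b)]

namespace IsDirichletForm

variable {X : Type*} [MeasurableSpace X] {μ : Measure X} {E : (X → ℝ) → ℝ≥0∞}

theorem parallelogram (hE : IsDirichletForm μ E) (u v : X → ℝ) :
    2 * E u + 2 * E v = E (u + v) + E (u - v) :=
  hE.2.1 u v

theorem energy_smul (hE : IsDirichletForm μ E) (c : ℝ) (u : X → ℝ) :
    E (c • u) = ENNReal.ofReal (c ^ 2) * E u :=
  hE.2.2.1 c u

theorem lintegral_sq_lt_top (hE : IsDirichletForm μ E) {u : X → ℝ} (hu : E u < ⊤) :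
    ∫⁻ x, ENNReal.ofReal (u x ^ 2) ∂μ < ⊤ :=
  hE.2.2.2.1 u hu

theorem energy_neg (hE : IsDirichletForm μ E) (u : X → ℝ) : E (-u) = E u := by
  simpa using hE.energy_smul (-1) u

theorem energy_add_le (hE : IsDirichletForm μ E) (u v : X → ℝ) :
    E (u + v) ≤ 2 * E u + 2 * E v :=
  (hE.parallelogram u v).symm ▸ le_self_add

theorem energy_abs_le (hE : IsDirichletForm μ E) (u : X → ℝ) : E |u| ≤ E u :=
  hE.2.2.2.2.2 abs abs_zero (fun x y => abs_abs_sub_abs_le_abs_sub x y) u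

theorem energy_sup_le (hE : IsDirichletForm μ E) (u v : X → ℝ) :
    E (u ⊔ v) ≤ E u + E v := by
  have hsum : E (u + v + |v - u|) ≤ 4 * (E u + E v) :=
    calc E (u + v + |v - u|) ≤ 2 * E (u + v) + 2 * E |v - u| := hE.energy_add_le _ _
      _ ≤ 2 * (E (u + v) + E (u - v)) := by
          rw [mul_add]; gcongr
          calc E |v - u| ≤ E (v - u) := hE.energy_abs_le _
            _ = E (u - v) := by rw [← neg_sub, hE.energy_neg]
      _ = 4 * (E u + E v) := by rw [← hE.parallelogram]; ring
  have hquarter : ENNReal.ofReal ((2⁻¹ : ℝ) ^ 2) = 4⁻¹ := by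
    rw [inv_pow, ENNReal.ofReal_inv_of_pos (by norm_num)]
    norm_num
  calc E (u ⊔ v) = 4⁻¹ * E (u + v + |v - u|) := by
        rw [sup_eq_half_smul_add_add_abs_sub' ℝ, hE.energy_smul, hquarter]
    _ ≤ 4⁻¹ * (4 * (E u + E v)) := by gcongr
    _ = E u + E v := by
        rw [← mul_assoc, ENNReal.inv_mul_cancel (by norm_num) (by norm_num), one_mul]

theorem energy_inf_le (hE : IsDirichletForm μ E) (u v : X → ℝ) :
    E (u ⊓ v) ≤ E u + E v := by
  calc E (u ⊓ v) = E (-u ⊔ -v) := by rw [← hE.energy_neg, neg_inf]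
    _ ≤ E u + E v := by simpa only [hE.energy_neg] using hE.energy_sup_le (-u) (-v)

theorem energy_symmClamp_le (hE : IsDirichletForm μ E) (u v : X → ℝ) :
    E (fun x => symmClamp |v x| (u x)) ≤ E u + 2 * E v :=
  calc E (fun x => symmClamp |v x| (u x)) = E ((u ⊔ -|v|) ⊓ |v|) := rfl
    _ ≤ E u + E (-|v|) + E |v| :=
        (hE.energy_inf_le _ _).trans (add_le_add_left (hE.energy_sup_le _ _) _)
    _ ≤ E u + E v + E v := by
        rw [hE.energy_neg]; gcongr <;> exact hE.energy_abs_le v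
    _ = E u + 2 * E v := by ring

end IsDirichletForm

section Measure

variable {X : Type*} [MeasurableSpace X] {μ : Measure X}

theorem exists_setLIntegral_compl_lt [SigmaFinite μ] {W : X → ℝ≥0∞}
    (hW : ∫⁻ x, W x ∂μ ≠ ⊤) {a : ℝ≥0∞} (ha : 0 < a) :
    ∃ U, MeasurableSet U ∧ μ U < ⊤ ∧ ∫⁻ x in Uᶜ, W x ∂μ < a := by
  have := isFiniteMeasure_withDensity hW
  have hlim : Tendsto (fun n => μ.withDensity W (spanningSets μ n)ᶜ) atTop (𝓝 0) := by
    have h := tendsto_measure_iInter_atTop (μ := μ.withDensity W)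
      (fun n => (measurableSet_spanningSets μ n).compl.nullMeasurableSet)
      (fun m n hmn => Set.compl_subset_compl.2 (monotone_spanningSets μ hmn))
      ⟨0, measure_ne_top _ _⟩
    rwa [← Set.compl_iUnion, iUnion_spanningSets, Set.compl_univ, measure_empty] at h
  obtain ⟨n, hn⟩ := (hlim.eventually_lt_const ha).exists
  exact ⟨spanningSets μ n, measurableSet_spanningSets μ n, measure_spanningSets_lt_top μ n,
    by rwa [withDensity_apply' W] at hn⟩

theorem lintegral_ofReal_sq_lt_top_of_abs_le {u v : X → ℝ} (huv : ∀ x, |u x| ≤ |v x|)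
    (hv : ∫⁻ x, ENNReal.ofReal (v x ^ 2) ∂μ < ⊤) :
    ∫⁻ x, ENNReal.ofReal (u x ^ 2) ∂μ < ⊤ :=
  (lintegral_mono fun x => ENNReal.ofReal_le_ofReal (sq_le_sq.2 (huv x))).trans_lt hv

theorem TendstoLocInMeasure.of_abs_sub_le {ι : Type*} {l : Filter ι} {F G : ι → X → ℝ}
    {f g : X → ℝ} (hF : TendstoLocInMeasure μ l F f)
    (hle : ∀ i x, |G i x - g x| ≤ |F i x - f x|) : TendstoLocInMeasure μ l G g :=
  fun U hU hUfin ε hε => tendsto_of_tendsto_of_tendsto_of_le_of_le tendsto_const_nhds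
    (hF U hU hUfin ε hε) (fun _ => zero_le)
    (fun i => measure_mono fun x hx => ⟨hx.1, hx.2.trans (hle i x)⟩)

theorem TendstoLocInMeasure.tendsto_lintegral_sq [SigmaFinite μ] {ι : Type*} {l : Filter ι}
    {F : ι → X → ℝ} {f g : X → ℝ} (hF : TendstoLocInMeasure μ l F f) (c : ℝ)
    (hle : ∀ i x, |F i x - f x| ≤ c * |g x|) (hg : ∫⁻ x, ENNReal.ofReal (g x ^ 2) ∂μ < ⊤) :
    Tendsto (fun i => ∫⁻ x, ENNReal.ofReal ((F i x - f x) ^ 2) ∂μ) l (𝓝 0) := by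
  set W : X → ℝ≥0∞ := fun x => ENNReal.ofReal (c ^ 2) * ENNReal.ofReal (g x ^ 2)
  have hW : ∫⁻ x, W x ∂μ ≠ ⊤ := by
    rw [lintegral_const_mul' _ _ ENNReal.ofReal_ne_top]
    exact ENNReal.mul_ne_top ENNReal.ofReal_ne_top hg.ne
  have hFW : ∀ i x, ENNReal.ofReal ((F i x - f x) ^ 2) ≤ W x := fun i x =>
    calc ENNReal.ofReal ((F i x - f x) ^ 2) ≤ ENNReal.ofReal ((c * |g x|) ^ 2) :=
          ENNReal.ofReal_le_ofReal (sq_le_sq' (abs_le.1 (hle i x)).1 (abs_le.1 (hle i x)).2)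
      _ = W x := by rw [mul_pow, sq_abs, ENNReal.ofReal_mul (sq_nonneg c)]
  rw [ENNReal.tendsto_nhds_zero]
  intro η hη
  have hη3 : 0 < η / 3 := ENNReal.div_pos hη.ne' (by norm_num)
  obtain ⟨U, hU, hUfin, hUW⟩ := exists_setLIntegral_compl_lt hW hη3
  obtain ⟨δ, hδ, hδW⟩ := exists_pos_setLIntegral_lt_of_measure_lt hW hη3.ne'
  obtain ⟨t, ht, htU⟩ := ENNReal.exists_pos_ofReal_mul_lt hUfin.ne hη3.ne'
  filter_upwards [(hF U hU hUfin _ (Real.sqrt_pos.2 ht)).eventually_lt_const hδ] with i hi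
  set T := toMeasurable μ (U ∩ {x | √t ≤ |F i x - f x|})
  have hT : MeasurableSet T := measurableSet_toMeasurable _ _
  have hsmall : ∀ x ∈ U \ T, ENNReal.ofReal ((F i x - f x) ^ 2) ≤ ENNReal.ofReal t := by
    intro x hx
    have hlt : |F i x - f x| < √t :=
      not_le.1 fun h => hx.2 (subset_toMeasurable _ _ ⟨hx.1, h⟩)
    refine ENNReal.ofReal_le_ofReal ?_
    simpa using ((Real.lt_sqrt (abs_nonneg _)).1 hlt).le
  calc ∫⁻ x, ENNReal.ofReal ((F i x - f x) ^ 2) ∂μ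
      = ∫⁻ x in U ∩ T, ENNReal.ofReal ((F i x - f x) ^ 2) ∂μ
        + ∫⁻ x in U \ T, ENNReal.ofReal ((F i x - f x) ^ 2) ∂μ
        + ∫⁻ x in Uᶜ, ENNReal.ofReal ((F i x - f x) ^ 2) ∂μ := by
        rw [lintegral_inter_add_sdiff _ U hT, lintegral_add_compl _ hU]
    _ ≤ ∫⁻ x in U ∩ T, W x ∂μ + ∫⁻ x in U \ T, ENNReal.ofReal t ∂μ + ∫⁻ x in Uᶜ, W x ∂μ := by
        refine add_le_add (add_le_add (lintegral_mono (hFW i)) ?_) (lintegral_mono (hFW i))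
        exact setLIntegral_mono' (hU.diff hT) hsmall
    _ ≤ η / 3 + η / 3 + η / 3 := by
        refine add_le_add (add_le_add (hδW _ ?_).le ?_) hUW.le
        · calc μ (U ∩ T) ≤ μ T := measure_mono Set.inter_subset_right
            _ < δ := by rwa [measure_toMeasurable]
        · rw [setLIntegral_const]
          exact (mul_le_mul_right (measure_mono Set.sdiff_subset) _).trans htU.le
    _ = η := ENNReal.add_thirds η

end Measure

namespace IsDirichletForm

variable {X : Type*} [MeasurableSpace X] {μ : Measure X} {E : (X → ℝ) → ℝ≥0∞}

theorem le_of_tendsto_lintegral_sq (hE : IsDirichletForm μ E) {ι : Type*} [Preorder ι]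
    [IsDirected ι (· ≤ ·)] [Nonempty ι] {G : ι → X → ℝ} {g : X → ℝ} {C : ℝ≥0∞}
    (hG : ∀ i, ∫⁻ x, ENNReal.ofReal (G i x ^ 2) ∂μ < ⊤)
    (hg : ∫⁻ x, ENNReal.ofReal (g x ^ 2) ∂μ < ⊤)
    (hlim : Tendsto (fun i => ∫⁻ x, ENNReal.ofReal ((G i x - g x) ^ 2) ∂μ) atTop (𝓝 0))
    (hC : ∀ᶠ i in atTop, E (G i) ≤ C) : E g ≤ C := by
  -- The lower semicontinuity in `IsDirichletForm` only sees index types of one fixed universe,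
  -- hence the detour through a sequence indexed by `ULift ℕ`.
  obtain ⟨s, hs, hsC⟩ := ENNReal.exists_seq_tendsto_zero_forall hlim hC
  have hdown : Tendsto (ULift.down : ULift ℕ → ℕ) atTop atTop :=
    tendsto_atTop_atTop.2 fun n => ⟨ULift.up n, fun _ => id⟩
  obtain ⟨-, -, -, -, hlsc, -⟩ := hE
  calc E g ≤ liminf (fun n : ULift ℕ => E (G (s n.down))) atTop :=
        hlsc (ULift ℕ) (fun n => G (s n.down)) g (fun _ => hG _) hg (hs.comp hdown)
    _ ≤ C := liminf_le_of_frequently_le' (Frequently.of_forall fun _ => hsC _)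

theorem eventually_energy_le_of_cauchy (hE : IsDirichletForm μ E) {ι : Type*} [Preorder ι]
    {F : ι → X → ℝ} (hdom : ∀ i, E (F i) < ⊤)
    (hcauchy : ∀ ε : ℝ, 0 < ε → ∃ i₀, ∀ i j, i₀ ≤ i → i₀ ≤ j →
      E (F i - F j) ≤ ENNReal.ofReal ε) :
    ∃ C, C ≠ ⊤ ∧ ∀ᶠ i in atTop, E (F i) ≤ C := by
  obtain ⟨i₀, hi₀⟩ := hcauchy 1 one_pos
  refine ⟨2 * ENNReal.ofReal 1 + 2 * E (F i₀), by finiteness [(hdom i₀).ne], ?_⟩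
  filter_upwards [eventually_ge_atTop i₀] with i hi
  calc E (F i) = E (F i - F i₀ + F i₀) := by rw [sub_add_cancel]
    _ ≤ 2 * E (F i - F i₀) + 2 * E (F i₀) := hE.energy_add_le _ _
    _ ≤ 2 * ENNReal.ofReal 1 + 2 * E (F i₀) := by gcongr; exact hi₀ i i₀ hi le_rfl

theorem energy_symmClamp_le_of_tendstoLocInMeasure [SigmaFinite μ] (hE : IsDirichletForm μ E)
    {ι : Type*} [Preorder ι] [IsDirected ι (· ≤ ·)] [Nonempty ι] {F : ι → X → ℝ}
    {f g : X → ℝ} (hF : TendstoLocInMeasure μ atTop F f)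
    (hg : ∫⁻ x, ENNReal.ofReal (g x ^ 2) ∂μ < ⊤) {C : ℝ≥0∞} (hC : ∀ᶠ i in atTop, E (F i) ≤ C) :
    E (fun x => symmClamp |g x| (f x)) ≤ C + 2 * E g := by
  have hbound : ∀ u : X → ℝ, ∀ x, |symmClamp |g x| (u x)| ≤ |g x| := fun u x =>
    abs_symmClamp_le (abs_nonneg _) _
  refine hE.le_of_tendsto_lintegral_sq (G := fun i x => symmClamp |g x| (F i x))
    (fun i => lintegral_ofReal_sq_lt_top_of_abs_le (hbound (F i)) hg)
    (lintegral_ofReal_sq_lt_top_of_abs_le (hbound f) hg) ?_ ?_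
  · refine TendstoLocInMeasure.tendsto_lintegral_sq (g := g) ?_ 2
      (fun i x => abs_symmClamp_sub_symmClamp_le_two_mul (abs_nonneg _) _ _) hg
    exact hF.of_abs_sub_le fun i x => abs_symmClamp_sub_symmClamp_le _ _ _
  · filter_upwards [hC] with i hi
    exact (hE.energy_symmClamp_le (F i) g).trans (by gcongr)

end IsDirichletForm

theorem TendstoLocInMeasure.tendsto_lintegral_sq_symmClamp_sub {X : Type*} [MeasurableSpace X]
    {μ : Measure X} [SigmaFinite μ] {ι : Type*} {l : Filter ι} {F : ι → X → ℝ} {f : X → ℝ}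
    (hF : TendstoLocInMeasure μ l F f) (hf : ∫⁻ x, ENNReal.ofReal (f x ^ 2) ∂μ < ⊤) :
    Tendsto (fun i => ∫⁻ x, ENNReal.ofReal ((symmClamp |F i x| (f x) - f x) ^ 2) ∂μ) l
      (𝓝 0) := by
  refine TendstoLocInMeasure.tendsto_lintegral_sq (g := f) ?_ 2 (fun i x => ?_) hf
  · exact hF.of_abs_sub_le fun i x => abs_symmClamp_abs_sub_le _ _
  · linarith [abs_sub (symmClamp |F i x| (f x)) (f x),
      abs_symmClamp_le_abs (abs_nonneg (F i x)) (f x)]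

/-- the domain of a Dirichlet form is the intersection of the extended
Dirichlet space with `L²(μ)`. -/
theorem stmt_6 {X : Type*} [MeasurableSpace X] (μ : Measure X) [SigmaFinite μ]
    (E : (X → ℝ) → ℝ≥0∞) (hE : IsDirichletForm μ E)
    (f : X → ℝ) (hf : ∫⁻ x, ENNReal.ofReal (f x ^ 2) ∂μ < ⊤)
    (ι : Type*) [Preorder ι] [IsDirected ι (· ≤ ·)] [Nonempty ι]
    (F : ι → X → ℝ) (hdom : ∀ i, E (F i) < ⊤)
    (hcauchy : ∀ ε : ℝ, 0 < ε → ∃ i₀, ∀ i j, i₀ ≤ i → i₀ ≤ j →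
      E (F i - F j) ≤ ENNReal.ofReal ε)
    (hconv : TendstoLocInMeasure μ atTop F f) :
    E f < ⊤ := by
  obtain ⟨C, hCtop, hC⟩ := hE.eventually_energy_le_of_cauchy hdom hcauchy
  have hclamp : ∀ k, E (fun x => symmClamp |F k x| (f x)) ≤ C + 2 * E (F k) := fun k =>
    hE.energy_symmClamp_le_of_tendstoLocInMeasure hconv (hE.lintegral_sq_lt_top (hdom k)) hC
  have hf_le : E f ≤ C + 2 * C :=
    hE.le_of_tendsto_lintegral_sq
      (fun k => lintegral_ofReal_sq_lt_top_of_abs_le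
        (fun x => abs_symmClamp_le_abs (abs_nonneg _) _) hf) hf
      (hconv.tendsto_lintegral_sq_symmClamp_sub hf)
      (hC.mono fun k hk => (hclamp k).trans (by gcongr))
  exact hf_le.trans_lt (by finiteness)
end
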